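/- arXiv:1207.5712 — 2 statements merged into one kernel-verified Lean document; each statement's English description precedes it below -/
import Mathlib

section
/- Let G be the simple graph on vertex set {1,...,7} with edge set E = {{1,2},{1,5},{1,6},{1,7},{2,3},{2,7},{3,4},{3,7},{4,5},{4,6},{4,7},{5,6},{6,7}} (the graph G1097 of the atlas). Then msr(G) = 4; that is, there exists a 7×7 Hermitian positive semidefinite complex matrix with graph G of rank 4, and every 7×7 Hermitian positive semidefinite complex matrix with graph G has rank at least 4. -/
/-!
In a positive semidefinite matrix, a path `i - j - k` with `i ≁ k` makes the principal minor
on `{j, k}` nonzero: if it vanished, `y = M k k • e j - M k j • e k` would satisfy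
`y* M y = 0`, hence `M y = 0`, whose `i`-th entry is `M k k * M i j ≠ 0`. The paths 1-2-3 and
7-6-5 of G1097 give two such minors on vertex sets with no edge between them, so the principal
submatrix on `{2, 3, 5, 6}` is block diagonal and nonsingular, and `msr ≥ 4`. Conversely `BᴴB`
has rank at most 4 for the explicit integer `4 × 7` matrix `B` below, whose columns are
orthogonal exactly along the non-edges.
-/

open Matrix ComplexOrder

/-- The edge set of the graph G1097 on vertices 1,...,7. -/
def edgesG1097 : Set (Sym2 ℕ) :=
  {s(1, 2), s(1, 5), s(1, 6), s(1, 7), s(2, 3), s(2, 7), s(3, 4), s(3, 7), s(4, 5), s(4, 6), s(4, 7), s(5, 6), s(6, 7)}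

/-- `M` has graph G1097: for `i ≠ j`, `M i j ≠ 0` iff `{i+1, j+1}` is an edge of G1097. -/
def HasGraphG1097 (M : Matrix (Fin 7) (Fin 7) ℂ) : Prop :=
  ∀ i j : Fin 7, i ≠ j → (M i j ≠ 0 ↔ s((i : ℕ) + 1, (j : ℕ) + 1) ∈ edgesG1097)

namespace Matrix

theorem card_le_rank_of_det_submatrix_ne_zero {K ι m n : Type*} [Field K] [Fintype n]
    [Fintype m] [DecidableEq m] (M : Matrix ι n K) (f : m → ι) (g : m → n)
    (h : (M.submatrix f g).det ≠ 0) :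
    Fintype.card m ≤ M.rank := by
  have hunit : IsUnit (M.submatrix f g) := (isUnit_iff_isUnit_det _).mpr h.isUnit
  simpa [rank_of_isUnit _ hunit] using rank_submatrix_le M f g

theorem det_submatrix_sumElim_of_apply_eq_zero {R ι m n : Type*} [CommRing R]
    [Fintype m] [Fintype n] [DecidableEq m] [DecidableEq n]
    (M : Matrix ι ι R) (f : m → ι) (g : n → ι) (h : ∀ i j, M (g i) (f j) = 0) :
    (M.submatrix (Sum.elim f g) (Sum.elim f g)).det =
      (M.submatrix f f).det * (M.submatrix g g).det := by
  rw [← fromBlocks_toBlocks (M.submatrix _ _)]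
  have h₂₁ : (M.submatrix (Sum.elim f g) (Sum.elim f g)).toBlocks₂₁ = 0 := by
    ext i j
    exact h i j
  rw [h₂₁, det_fromBlocks_zero₂₁]
  rfl

namespace PosSemidef

variable {𝕜 n : Type*} [RCLike 𝕜] [Fintype n] [DecidableEq n] {M : Matrix n n 𝕜}

theorem apply_eq_zero_of_diag_eq_zero (hM : M.PosSemidef) {j k : n} (hk : M k k = 0) :
    M j k = 0 := by
  have hcol : M *ᵥ Pi.single k 1 = 0 :=
    (hM.dotProduct_mulVec_zero_iff _).mp (by simp [hk])
  simpa using congrFun hcol j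

theorem det_submatrix_pair_ne_zero (hM : M.PosSemidef) {i j k : n}
    (hij : M i j ≠ 0) (hik : M i k = 0) (hjk : M j k ≠ 0) :
    (M.submatrix ![j, k] ![j, k]).det ≠ 0 := by
  rw [det_fin_two]
  intro hdet
  simp only [submatrix_apply, Matrix.cons_val_zero, Matrix.cons_val_one] at hdet
  -- `(M *ᵥ y) j` is the vanishing minor and `(M *ᵥ y) k` vanishes identically.
  set y : n → 𝕜 := Pi.single j (M k k) - Pi.single k (M k j)
  have hMy : M *ᵥ y = fun p => M p j * M k k - M p k * M k j := by
    ext p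
    simp [y, mulVec_sub, mul_comm]
  have hform : star y ⬝ᵥ M *ᵥ y = 0 := by
    rw [hMy]
    simp [y, sub_dotProduct, hdet, mul_comm]
  have hi := congrFun ((hM.dotProduct_mulVec_zero_iff y).mp hform) i
  rw [hMy] at hi
  simp only [hik, zero_mul, sub_zero, Pi.zero_apply, mul_eq_zero] at hi
  exact hi.elim hij fun hkk => hjk (hM.apply_eq_zero_of_diag_eq_zero hkk)

end PosSemidef

end Matrix

instance : DecidablePred (· ∈ edgesG1097) := fun e => by unfold edgesG1097; infer_instance

namespace HasGraphG1097

variable {M : Matrix (Fin 7) (Fin 7) ℂ}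

theorem apply_ne_zero (hG : HasGraphG1097 M) {i j : Fin 7} (hij : i ≠ j)
    (h : s((i : ℕ) + 1, (j : ℕ) + 1) ∈ edgesG1097) : M i j ≠ 0 :=
  (hG i j hij).mpr h

theorem apply_eq_zero (hG : HasGraphG1097 M) {i j : Fin 7} (hij : i ≠ j)
    (h : s((i : ℕ) + 1, (j : ℕ) + 1) ∉ edgesG1097) : M i j = 0 :=
  not_not.mp (mt (hG i j hij).mp h)

end HasGraphG1097

theorem hasGraphG1097_map_intCast {N : Matrix (Fin 7) (Fin 7) ℤ}
    (hN : ∀ i j : Fin 7, i ≠ j →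
      (N i j ≠ 0 ↔ s((i : ℕ) + 1, (j : ℕ) + 1) ∈ edgesG1097)) :
    HasGraphG1097 (N.map (Int.cast : ℤ → ℂ)) := by
  intro i j hij
  rw [map_apply, Int.cast_ne_zero]
  exact hN i j hij

theorem four_le_rank_of_hasGraphG1097 {M : Matrix (Fin 7) (Fin 7) ℂ} (hM : M.PosSemidef)
    (hG : HasGraphG1097 M) : 4 ≤ M.rank := by
  -- Indices are 0-based: the paths are 1-2-3 and 7-6-5 of the header.
  have h₁ : (M.submatrix ![1, 2] ![1, 2]).det ≠ 0 :=
    hM.det_submatrix_pair_ne_zero (i := 0) (hG.apply_ne_zero (by decide) (by decide))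
      (hG.apply_eq_zero (by decide) (by decide)) (hG.apply_ne_zero (by decide) (by decide))
  have h₂ : (M.submatrix ![5, 4] ![5, 4]).det ≠ 0 :=
    hM.det_submatrix_pair_ne_zero (i := 6) (hG.apply_ne_zero (by decide) (by decide))
      (hG.apply_eq_zero (by decide) (by decide)) (hG.apply_ne_zero (by decide) (by decide))
  have hblock : (M.submatrix (Sum.elim ![1, 2] ![5, 4]) (Sum.elim ![1, 2] ![5, 4])).det =
      (M.submatrix ![1, 2] ![1, 2]).det * (M.submatrix ![5, 4] ![5, 4]).det := by
    refine det_submatrix_sumElim_of_apply_eq_zero M _ _ fun a b => ?_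
    fin_cases a <;> fin_cases b <;> exact hG.apply_eq_zero (by decide) (by decide)
  exact card_le_rank_of_det_submatrix_ne_zero (m := Fin 2 ⊕ Fin 2) M _ _
    (hblock ▸ mul_ne_zero h₁ h₂)

def witnessG1097 : Matrix (Fin 4) (Fin 7) ℤ :=
  !![1, 1, 1, 0, 0, 0, 1;
     -1, 0, 1, 2, 0, 0, 1;
     1, 0, 0, 1, 1, 1, 0;
     1, 0, 0, 1, 0, 1, 1]

theorem conjTranspose_map_intCast_mul_self {m n : Type*} [Fintype m] (B : Matrix m n ℤ) :
    (B.map (Int.cast : ℤ → ℂ))ᴴ * B.map Int.cast = (Bᵀ * B).map Int.cast := by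
  have hB : (B.map (Int.cast : ℤ → ℂ))ᴴ = Bᵀ.map Int.cast := by
    ext i j
    simp
  rw [hB]
  exact (Matrix.map_mul (f := Int.castRingHom ℂ)).symm

theorem hasGraphG1097_witness :
    HasGraphG1097 ((witnessG1097.map (Int.cast : ℤ → ℂ))ᴴ * witnessG1097.map Int.cast) := by
  rw [conjTranspose_map_intCast_mul_self]
  exact hasGraphG1097_map_intCast (by decide)

/-- msr(G1097) = 4. -/
theorem msr_G1097 :
    (∃ M : Matrix (Fin 7) (Fin 7) ℂ, M.PosSemidef ∧ HasGraphG1097 M ∧ M.rank = 4) ∧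
    (∀ M : Matrix (Fin 7) (Fin 7) ℂ, M.PosSemidef → HasGraphG1097 M → 4 ≤ M.rank) := by
  refine ⟨?_, fun M hM hG => four_le_rank_of_hasGraphG1097 hM hG⟩
  set B := witnessG1097.map (Int.cast : ℤ → ℂ)
  have hpsd : (Bᴴ * B).PosSemidef := posSemidef_conjTranspose_mul_self B
  have hG : HasGraphG1097 (Bᴴ * B) := hasGraphG1097_witness
  have hle : (Bᴴ * B).rank ≤ 4 := by
    simpa [rank_conjTranspose_mul_self] using B.rank_le_card_height
  exact ⟨Bᴴ * B, hpsd, hG, le_antisymm hle (four_le_rank_of_hasGraphG1097 hpsd hG)⟩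
end

section
/- Let G be the simple graph on vertex set {1,...,7} with edge set E = {{1,2},{1,4},{1,5},{1,6},{1,7},{2,3},{2,4},{2,5},{2,6},{2,7},{3,5},{3,6},{4,5},{4,7},{5,6},{6,7}} (the graph G1222 of the atlas). Then msr(G) = 3; that is, there exists a 7×7 Hermitian positive semidefinite complex matrix with graph G of rank 3, and every 7×7 Hermitian positive semidefinite complex matrix with graph G has rank at least 3. -/
open Matrix ComplexOrder

/-- The edge set of the graph G1222 on vertices 1,...,7. -/
def edgesG1222 : Set (Sym2 ℕ) :=
  {s(1, 2), s(1, 4), s(1, 5), s(1, 6), s(1, 7), s(2, 3), s(2, 4), s(2, 5), s(2, 6), s(2, 7), s(3, 5), s(3, 6), s(4, 5), s(4, 7), s(5, 6), s(6, 7)}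

/-- `M` has graph G1222: for `i ≠ j`, `M i j ≠ 0` iff `{i+1, j+1}` is an edge of G1222. -/
def HasGraphG1222 (M : Matrix (Fin 7) (Fin 7) ℂ) : Prop :=
  ∀ i j : Fin 7, i ≠ j → (M i j ≠ 0 ↔ s((i : ℕ) + 1, (j : ℕ) + 1) ∈ edgesG1222)

/-!
A positive semidefinite matrix is the Gram matrix of vectors spanning a space of dimension equal to
its rank. In dimension two, two orthogonal nonzero vectors `u`, `w` form an orthogonal basis, so
`u`ᗮ is the line through `w` and `w`ᗮ the line through `u`; hence any vector orthogonal to `u` is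
orthogonal to any vector orthogonal to `w`. For G1222 take `u`, `w` the vectors of vertices 3 and 4
(non-adjacent, both adjacent to 5, hence nonzero) and the vectors of vertices 1 and 6: vertex 1 is
not adjacent to 3, vertex 6 is not adjacent to 4, yet 1 and 6 are adjacent, so the rank is at
least 3. Rank 3 is attained by the Gram matrix of seven explicit vectors in `ℂ³`.
-/

open Module Submodule
open scoped InnerProductSpace

section InnerProduct

variable {𝕜 E : Type*} [RCLike 𝕜] [NormedAddCommGroup E] [InnerProductSpace 𝕜 E]

theorem mem_span_singleton_of_mem_span_pair_of_inner_eq_zero {u w x : E} (hu : u ≠ 0)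
    (huw : ⟪u, w⟫_𝕜 = 0) (hx : x ∈ span 𝕜 {u, w}) (hux : ⟪u, x⟫_𝕜 = 0) : x ∈ 𝕜 ∙ w := by
  obtain ⟨a, b, rfl⟩ := mem_span_pair.mp hx
  have ha : a = 0 := by
    simpa [inner_add_right, inner_smul_right, huw, inner_self_eq_zero, hu] using hux
  simpa [ha] using smul_mem _ b (mem_span_singleton_self w)

theorem span_pair_eq_of_inner_eq_zero [FiniteDimensional 𝕜 E] {S : Submodule 𝕜 E}
    (hS : finrank 𝕜 S ≤ 2) {u w : E} (huS : u ∈ S) (hwS : w ∈ S) (hu : u ≠ 0) (hw : w ≠ 0)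
    (huw : ⟪u, w⟫_𝕜 = 0) : span 𝕜 {u, w} = S := by
  have hli : LinearIndependent 𝕜 ![u, w] := by
    refine linearIndependent_of_ne_zero_of_inner_eq_zero (by simp [Fin.forall_fin_two, hu, hw]) ?_
    intro i j hij
    fin_cases i <;> fin_cases j <;> simp_all [inner_eq_zero_symm]
  have hrank := finrank_span_eq_card hli
  rw [Matrix.range_cons, Matrix.range_cons, Matrix.range_empty, Set.union_empty,
    Set.singleton_union, Fintype.card_fin] at hrank
  refine eq_of_le_of_finrank_le (span_le.mpr (by simp [Set.insert_subset_iff, huS, hwS])) ?_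
  omega

theorem inner_eq_zero_of_finrank_le_two [FiniteDimensional 𝕜 E] {S : Submodule 𝕜 E}
    (hS : finrank 𝕜 S ≤ 2) {u w x y : E} (huS : u ∈ S) (hwS : w ∈ S) (hxS : x ∈ S) (hyS : y ∈ S)
    (hu : u ≠ 0) (hw : w ≠ 0) (huw : ⟪u, w⟫_𝕜 = 0) (hux : ⟪u, x⟫_𝕜 = 0) (hwy : ⟪w, y⟫_𝕜 = 0) :
    ⟪x, y⟫_𝕜 = 0 := by
  have hspan := span_pair_eq_of_inner_eq_zero hS huS hwS hu hw huw
  have hwu : ⟪w, u⟫_𝕜 = 0 := inner_eq_zero_symm.mp huw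
  obtain ⟨a, rfl⟩ := mem_span_singleton.mp <|
    mem_span_singleton_of_mem_span_pair_of_inner_eq_zero hu huw (hspan ▸ hxS) hux
  obtain ⟨b, rfl⟩ := mem_span_singleton.mp <|
    mem_span_singleton_of_mem_span_pair_of_inner_eq_zero hw hwu
      (by rwa [Set.pair_comm, hspan]) hwy
  simp [inner_smul_left, inner_smul_right, hwu]

end InnerProduct

namespace Matrix

variable {𝕜 m n : Type*} [RCLike 𝕜]

theorem gram_toLp_col [Fintype m] (B : Matrix m n 𝕜) :
    gram 𝕜 (fun j ↦ WithLp.toLp 2 (B.col j)) = Bᴴ * B := by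
  ext i j
  simp [gram_apply, EuclideanSpace.inner_toLp_toLp, mul_apply, dotProduct, mul_comm]

theorem finrank_span_range_toLp_col [Fintype n] (B : Matrix m n 𝕜) :
    finrank 𝕜 (span 𝕜 (Set.range fun j ↦ WithLp.toLp 2 (B.col j))) = B.rank := by
  rw [rank_eq_finrank_span_cols, Set.range_comp' (WithLp.toLp 2) B.col,
    ← LinearEquiv.finrank_map_eq (WithLp.linearEquiv 2 𝕜 (m → 𝕜)).symm, ← span_image]
  rfl

open scoped MatrixOrder in
theorem PosSemidef.exists_eq_gram [Fintype n] [DecidableEq n] {M : Matrix n n 𝕜}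
    (hM : M.PosSemidef) :
    ∃ v : n → EuclideanSpace 𝕜 n, gram 𝕜 v = M ∧ finrank 𝕜 (span 𝕜 (Set.range v)) = M.rank := by
  obtain ⟨B, rfl⟩ := CStarAlgebra.nonneg_iff_eq_star_mul_self.mp hM.nonneg
  refine ⟨_, gram_toLp_col B, ?_⟩
  rw [finrank_span_range_toLp_col, star_eq_conjTranspose, rank_conjTranspose_mul_self]

end Matrix

theorem HasGraphG1222.apply_eq_zero {M : Matrix (Fin 7) (Fin 7) ℂ} (hM : HasGraphG1222 M)
    {i j : Fin 7} (hij : i ≠ j) (he : s((i : ℕ) + 1, (j : ℕ) + 1) ∉ edgesG1222) : M i j = 0 :=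
  not_not.mp (mt (hM i j hij).mp he)

theorem HasGraphG1222.apply_ne_zero {M : Matrix (Fin 7) (Fin 7) ℂ} (hM : HasGraphG1222 M)
    {i j : Fin 7} (hij : i ≠ j) (he : s((i : ℕ) + 1, (j : ℕ) + 1) ∈ edgesG1222) : M i j ≠ 0 :=
  (hM i j hij).mpr he

theorem three_le_rank_of_hasGraphG1222 {M : Matrix (Fin 7) (Fin 7) ℂ} (hpsd : M.PosSemidef)
    (hM : HasGraphG1222 M) : 3 ≤ M.rank := by
  obtain ⟨v, rfl, hrank⟩ := hpsd.exists_eq_gram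
  by_contra! hlt
  have hmem : ∀ i, v i ∈ span ℂ (Set.range v) := fun i ↦ subset_span ⟨i, rfl⟩
  have hv_ne_zero : ∀ i j : Fin 7, i ≠ j → s((i : ℕ) + 1, (j : ℕ) + 1) ∈ edgesG1222 → v i ≠ 0 :=
    fun i j hij he hvi ↦ hM.apply_ne_zero hij he (by simp [gram_apply, hvi])
  -- vertices 1, 3, 4, 6 are the indices 0, 2, 3, 5
  refine hM.apply_ne_zero (i := 0) (j := 5) (by decide) (by simp [edgesG1222]) ?_
  exact inner_eq_zero_of_finrank_le_two (by omega) (hmem 2) (hmem 3) (hmem 0) (hmem 5)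
    (hv_ne_zero 2 4 (by decide) (by simp [edgesG1222]))
    (hv_ne_zero 3 4 (by decide) (by simp [edgesG1222]))
    (hM.apply_eq_zero (by decide) (by simp [edgesG1222]))
    (hM.apply_eq_zero (by decide) (by simp [edgesG1222]))
    (hM.apply_eq_zero (by decide) (by simp [edgesG1222]))

def witnessG1222 : Matrix (Fin 3) (Fin 7) ℂ :=
  !![-1, 0, 0, 1, -1, -1, 0;
     -1, 0, -1, -1, 1, 0, 1;
      1, 1, -1, 1, 1, 1, -1]

theorem witnessG1222_conjTranspose_mul_self :
    witnessG1222ᴴ * witnessG1222 =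
      !![ 3,  1,  0,  1,  1,  2, -2;
          1,  1, -1,  1,  1,  1, -1;
          0, -1,  2,  0, -2, -1,  0;
          1,  1,  0,  3, -1,  0, -2;
          1,  1, -2, -1,  3,  2,  0;
          2,  1, -1,  0,  2,  2, -1;
         -2, -1,  0, -2,  0, -1,  2] := by
  ext i j
  fin_cases i <;> fin_cases j <;>
    norm_num [witnessG1222, mul_apply, Fin.sum_univ_succ]

theorem hasGraphG1222_witness : HasGraphG1222 (witnessG1222ᴴ * witnessG1222) := by
  rw [witnessG1222_conjTranspose_mul_self]
  intro i j hij
  fin_cases i <;> fin_cases j <;>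
    simp only [edgesG1222, Set.mem_insert_iff, Set.mem_singleton_iff] <;>
    first
    | exact absurd rfl hij
    | exact iff_of_true (by simp) (by decide)
    | exact iff_of_false (by simp) (by decide)

/-- msr(G1222) = 3. -/
theorem msr_G1222 :
    (∃ M : Matrix (Fin 7) (Fin 7) ℂ, M.PosSemidef ∧ HasGraphG1222 M ∧ M.rank = 3) ∧
    (∀ M : Matrix (Fin 7) (Fin 7) ℂ, M.PosSemidef → HasGraphG1222 M → 3 ≤ M.rank) := by
  have hpsd := posSemidef_conjTranspose_mul_self witnessG1222
  have hrank : (witnessG1222ᴴ * witnessG1222).rank ≤ 3 := by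
    simpa [rank_conjTranspose_mul_self] using rank_le_card_height witnessG1222
  exact ⟨⟨_, hpsd, hasGraphG1222_witness,
      hrank.antisymm (three_le_rank_of_hasGraphG1222 hpsd hasGraphG1222_witness)⟩,
    fun _ ↦ three_le_rank_of_hasGraphG1222⟩
end
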